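/- For every λ ∈ ℤ^N: wt′(s_i(λ)) = wt(λ) in P; moreover, if s′_i : ℤ^N → ℤ^N denotes the map defined by the same formula as s_i but with respect to the parity sequence p̄′ (whose swap at positions i, i+1 returns p̄), then s′_i(s_i(λ)) = λ, so s_i is a bijection. -/

import Mathlib

namespace Kujawa

open Finset

variable {n : ℕ}

/-- The sign `(−1)^{p̄ i}` attached to the parity sequence `pb`. -/
def sg (pb : Fin (n + 1) → ZMod 2) (i : Fin (n + 1)) : ℤ :=
  if pb i = 0 then 1 else -1

/-- `ϑ_j = ∑_{i > j} (−1)^{p̄_i + p̄_j}`. -/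
def theta (pb : Fin (n + 1) → ZMod 2) (j : Fin (n + 1)) : ℤ :=
  ∑ i ∈ Finset.Ioi j, sg pb i * sg pb j

/-- The standard basis vector `ε_i` of `X(T) = ℤ^N`. -/
def eps (i : Fin (n + 1)) : Fin (n + 1) → ℤ := fun j => if j = i then 1 else 0

/-- The `j`-th residue `r_j(λ) = (λ + ϑ, ε_j)`. -/
def res (pb : Fin (n + 1) → ZMod 2) (l : Fin (n + 1) → ℤ) (j : Fin (n + 1)) : ℤ :=
  sg pb j * (l j + theta pb j)

/-- `ρ = ϑ + ∑_{i : p̄_i = 0} ε_i`, coordinatewise. -/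
def rho (pb : Fin (n + 1) → ZMod 2) (k : Fin (n + 1)) : ℤ :=
  theta pb k + (if pb k = 0 then 1 else 0)

/-- `l(λ) = ∑ λ_i`. -/
def ell (l : Fin (n + 1) → ℤ) : ℤ := ∑ i, l i

/-- The central character value `Z_r(λ)`. -/
def Zint (pb : Fin (n + 1) → ZMod 2) (r : ℕ) (l : Fin (n + 1) → ℤ) : ℤ :=
  ∑ s ∈ Finset.Icc 1 r, (-1 : ℤ) ^ (s - 1) *
    ∑ K ∈ Finset.powersetCard s (Finset.univ : Finset (Fin (n + 1))),
      ∑ a ∈ Fintype.piFinset (fun _ : Fin (n + 1) => Finset.range (r + 2)),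
        if (∑ k ∈ K, a k) = r - s + 1 ∧ (∀ k, k ∉ K → a k = 0) then
          (∏ k ∈ K, sg pb k) * ∏ k ∈ K, res pb l k ^ a k
        else 0

/-- `A_r(λ) = #{i : r_i(λ+ε_i) ≡ r (mod p)}`. -/
def Acount (pb : Fin (n + 1) → ZMod 2) (p : ℕ) (r : ZMod p) (l : Fin (n + 1) → ℤ) : ℕ :=
  (Finset.univ.filter fun i : Fin (n + 1) => ((res pb (l + eps i) i : ℤ) : ZMod p) = r).card

/-- `B_r(λ) = #{i : r_i(λ) ≡ r (mod p)}`. -/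
def Bcount (pb : Fin (n + 1) → ZMod 2) (p : ℕ) (r : ZMod p) (l : Fin (n + 1) → ℤ) : ℕ :=
  (Finset.univ.filter fun i : Fin (n + 1) => ((res pb l i : ℤ) : ZMod p) = r).card

/-- For `p = 0`: `γ_a` is the basis element `single a 1` of the free module `ℤ →₀ ℤ`. -/
noncomputable def gamma0 (a : ℤ) : ℤ →₀ ℤ := Finsupp.single a 1

/-- `wt` for `p = 0`, with values in the free `ℤ`-module on basis `{γ_a : a ∈ ℤ}`. -/
noncomputable def wt0 (pb : Fin (n + 1) → ZMod 2) (l : Fin (n + 1) → ℤ) : ℤ →₀ ℤ :=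
  ∑ i : Fin (n + 1), sg pb i • gamma0 (sg pb i * (l i + rho pb i))

/-- `Λ_r ∈ P = ℤδ ⊕ ⊕_{r ∈ ℤ/pℤ} ℤΛ_r`. -/
def LamP (p : ℕ) (r : ZMod p) : ℤ × (ZMod p → ℤ) := (0, fun s => if s = r then 1 else 0)

/-- `δ ∈ P`. -/
def delP (p : ℕ) : ℤ × (ZMod p → ℤ) := (1, 0)

/-- `γ_a = Λ_{s mod p} − Λ_{(s−1) mod p} − d·δ`, where `a = p·d + s` with `1 ≤ s ≤ p`. -/
def gammaP (p : ℕ) (a : ℤ) : ℤ × (ZMod p → ℤ) :=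
  LamP p (((a - 1) % (p : ℤ) + 1 : ℤ) : ZMod p) - LamP p (((a - 1) % (p : ℤ) : ℤ) : ZMod p) -
    ((a - 1) / (p : ℤ)) • delP p

/-- `wt` for prime `p`. -/
def wtP (p : ℕ) (pb : Fin (n + 1) → ZMod 2) (l : Fin (n + 1) → ℤ) : ℤ × (ZMod p → ℤ) :=
  ∑ i : Fin (n + 1), sg pb i • gammaP p (sg pb i * (l i + rho pb i))

/-- Entry `i` of the `r`-signature of `λ`: `1` codes `+`, `-1` codes `−`, `0` codes `0`. -/
def sig (pb : Fin (n + 1) → ZMod 2) (p : ℕ) (r : ZMod p) (l : Fin (n + 1) → ℤ)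
    (i : Fin (n + 1)) : ℤ :=
  if ((res pb (l + eps i) i : ℤ) : ZMod p) = r then 1
  else if ((res pb l i : ℤ) : ZMod p) = r then -1
  else 0

/-- Number of `−`'s of the `r`-signature of `λ` in positions `[i..j]`. -/
noncomputable def nM (pb : Fin (n + 1) → ZMod 2) (p : ℕ) (r : ZMod p) (l : Fin (n + 1) → ℤ)
    (i j : Fin (n + 1)) : ℕ :=
  Set.ncard {k : Fin (n + 1) | k ∈ Finset.Icc i j ∧ sig pb p r l k = -1}

/-- Number of `+`'s of the `r`-signature of `λ` in positions `[i..j]`. -/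
noncomputable def nP (pb : Fin (n + 1) → ZMod 2) (p : ℕ) (r : ZMod p) (l : Fin (n + 1) → ℤ)
    (i j : Fin (n + 1)) : ℕ :=
  Set.ncard {k : Fin (n + 1) | k ∈ Finset.Icc i j ∧ sig pb p r l k = 1}

/-- `i` is the position of a `−` in the reduced `r`-signature of `λ` (i.e. `i` is
`r`-normal for `λ`): the `−` at `i` is never cancelled, which happens exactly when every
interval `[i..j]` contains strictly more `−`'s than `+`'s. -/
def RMinus (pb : Fin (n + 1) → ZMod 2) (p : ℕ) (r : ZMod p) (l : Fin (n + 1) → ℤ)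
    (i : Fin (n + 1)) : Prop :=
  sig pb p r l i = -1 ∧ ∀ j : Fin (n + 1), i ≤ j → nP pb p r l i j < nM pb p r l i j

/-- `i` is the position of a `+` in the reduced `r`-signature of `λ` (i.e. `i` is
`r`-conormal for `λ`). -/
def RPlus (pb : Fin (n + 1) → ZMod 2) (p : ℕ) (r : ZMod p) (l : Fin (n + 1) → ℤ)
    (i : Fin (n + 1)) : Prop :=
  sig pb p r l i = 1 ∧ ∀ j : Fin (n + 1), j ≤ i → nM pb p r l j i < nP pb p r l j i

/-- `i` is the position of the leftmost `−` in the reduced `r`-signature (`r`-good). -/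
def RGood (pb : Fin (n + 1) → ZMod 2) (p : ℕ) (r : ZMod p) (l : Fin (n + 1) → ℤ)
    (i : Fin (n + 1)) : Prop :=
  RMinus pb p r l i ∧ ∀ j : Fin (n + 1), j < i → ¬ RMinus pb p r l j

/-- `i` is the position of the rightmost `+` in the reduced `r`-signature (`r`-cogood). -/
def RCogood (pb : Fin (n + 1) → ZMod 2) (p : ℕ) (r : ZMod p) (l : Fin (n + 1) → ℤ)
    (i : Fin (n + 1)) : Prop :=
  RPlus pb p r l i ∧ ∀ j : Fin (n + 1), i < j → ¬ RPlus pb p r l j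

open Classical in
/-- The crystal operator `ẽ*_r`, with `none` playing the role of `0`. -/
noncomputable def eStar (pb : Fin (n + 1) → ZMod 2) (p : ℕ) (r : ZMod p)
    (l : Fin (n + 1) → ℤ) : Option (Fin (n + 1) → ℤ) :=
  if h : (Finset.univ.filter (RMinus pb p r l)).Nonempty then
    some (l - eps ((Finset.univ.filter (RMinus pb p r l)).min' h))
  else none

open Classical in
/-- The crystal operator `f̃*_r`, with `none` playing the role of `0`. -/
noncomputable def fStar (pb : Fin (n + 1) → ZMod 2) (p : ℕ) (r : ZMod p)
    (l : Fin (n + 1) → ℤ) : Option (Fin (n + 1) → ℤ) :=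
  if h : (Finset.univ.filter (RPlus pb p r l)).Nonempty then
    some (l + eps ((Finset.univ.filter (RPlus pb p r l)).max' h))
  else none

/-- `A ↓ B`: there is an injection `θ : A → B` with `θ a ≤ a` for all `a ∈ A`. -/
def Down (A B : Finset (Fin (n + 1))) : Prop :=
  ∃ θ : Fin (n + 1) → Fin (n + 1), Set.InjOn θ ↑A ∧ ∀ a ∈ A, θ a ∈ B ∧ θ a ≤ a

/-- `C_{i,j}(λ) = {h ∈ (i..j) : c_{i,h}(λ) ≡ 0 (mod p)}`. -/
def Cset (pb : Fin (n + 1) → ZMod 2) (p : ℕ) (l : Fin (n + 1) → ℤ) (i j : Fin (n + 1)) :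
    Finset (Fin (n + 1)) :=
  (Finset.Ioo i j).filter fun h => ((res pb l i - res pb l h : ℤ) : ZMod p) = 0

/-- `B_{i,j}(λ) = {h ∈ [i..j) : b_{i,h}(λ) ≡ 0 (mod p)}`. -/
def Bset (pb : Fin (n + 1) → ZMod 2) (p : ℕ) (l : Fin (n + 1) → ℤ) (i j : Fin (n + 1)) :
    Finset (Fin (n + 1)) :=
  (Finset.Ico i j).filter fun h =>
    ((res pb l i - res pb (l + eps (h + 1)) (h + 1) : ℤ) : ZMod p) = 0

/-- The opposite parity sequence `p̄′_k = p̄_{w₀ k} + 1̄`, where `w₀ k = N + 1 − k`. -/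
def pbRev (pb : Fin (n + 1) → ZMod 2) : Fin (n + 1) → ZMod 2 := fun k => pb k.rev + 1

/-- `s̃ : ℤ^N → ℤ^N`, `(s̃ λ)_{w₀ i} = −λ_i`. -/
def stilde (l : Fin (n + 1) → ℤ) : Fin (n + 1) → ℤ := fun k => -l k.rev

/-- `(i, j)` is an `r`-canceling pair for `λ` (for `i < j`). -/
def CPair (pb : Fin (n + 1) → ZMod 2) (p : ℕ) (r : ZMod p) (l : Fin (n + 1) → ℤ)
    (i j : Fin (n + 1)) : Prop :=
  sig pb p r l i = -1 ∧ sig pb p r l j = 1 ∧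
    ∀ k : Fin (n + 1), i < k → k < j → sig pb p r l k = 0

/-- `(i i+1)·λ`: interchange coordinates `i` and `i+1`. -/
def swapL (i : Fin (n + 1)) (l : Fin (n + 1) → ℤ) : Fin (n + 1) → ℤ :=
  fun k => if k = i then l (i + 1) else if k = i + 1 then l i else l k

/-- The parity sequence obtained from `pb` by interchanging entries `i` and `i+1`. -/
def pbSwap (pb : Fin (n + 1) → ZMod 2) (i : Fin (n + 1)) : Fin (n + 1) → ZMod 2 :=
  fun k => if k = i then pb (i + 1) else if k = i + 1 then pb i else pb k

/-- The odd reflection `s_i` on `X(T)`. -/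
def sI (pb : Fin (n + 1) → ZMod 2) (p : ℕ) (i : Fin (n + 1)) (l : Fin (n + 1) → ℤ) :
    Fin (n + 1) → ℤ :=
  if ((sg pb i * l i - sg pb (i + 1) * l (i + 1) : ℤ) : ZMod p) = 0 then swapL i l
  else swapL i l + eps i - eps (i + 1)


/-!
Write `σ` for the transposition of `i` and `i + 1`. Passing from `p̄` to `p̄′ = p̄ ∘ σ` permutes
the signs by `σ`, fixes `ρ` away from `i, i + 1`, and gives `ρ′_i = ρ_{i+1} − 1`,
`ρ′_{i+1} = ρ_i + 1`; moreover `(ρ, ε_i − ε_{i+1}) = 0`. So with `a = (λ + ρ, ε_i)` and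
`b = (λ + ρ, ε_{i+1})`, the `γ`-arguments of `wt′(s_i λ)` at `i, i + 1` are `b, a` when
`(λ, ε_i − ε_{i+1}) ≢ 0` (the shift by `ε_i − ε_{i+1}` cancels the change of `ρ`), and
`b + c, a + c` with `c = (−1)^{p̄_i}` otherwise; in that case `a ≡ b (mod p)`, and
`γ_{a+pk} = γ_a − kδ` makes `γ_{a+c} − γ_{b+c} = γ_a − γ_b`. Finally
`(s_i λ, ε_i − ε_{i+1})′ = −(λ, ε_i − ε_{i+1})`, so `s′_i` takes the same branch as `s_i` and
undoes it.
-/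

lemma sum_eq_sum_of_eq_off_pair {ι M : Type*} [Fintype ι] [DecidableEq ι] [AddCommMonoid M]
    {i j : ι} (hij : i ≠ j) {F G : ι → M} (hoff : ∀ k, k ≠ i → k ≠ j → F k = G k)
    (hpair : F i + F j = G i + G j) : ∑ k, F k = ∑ k, G k := by
  rw [← sum_add_sum_compl {i, j} F, ← sum_add_sum_compl {i, j} G, sum_pair hij, sum_pair hij,
    hpair]
  congr 1
  refine sum_congr rfl fun k hk => ?_
  simp only [mem_compl, mem_insert, mem_singleton, not_or] at hk
  exact hoff k hk.1 hk.2

/-- `wt0 = weightSum gamma0` and `wtP p = weightSum (gammaP p)`. -/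
def weightSum {M : Type*} [AddCommGroup M] (g : ℤ → M) (pb : Fin (n + 1) → ZMod 2)
    (l : Fin (n + 1) → ℤ) : M :=
  ∑ k, sg pb k • g (sg pb k * (l k + rho pb k))

section OddReflection

variable {pb : Fin (n + 1) → ZMod 2} {i : Fin (n + 1)}

lemma val_add_one_of_val_lt (hi : (i : ℕ) < n) : ((i + 1 : Fin (n + 1)) : ℕ) = i + 1 :=
  Fin.val_add_one_of_lt (by rwa [Fin.lt_def])

lemma add_one_ne_self_of_val_lt (hi : (i : ℕ) < n) : i + 1 ≠ i := by
  rw [Fin.ne_iff_vne, val_add_one_of_val_lt hi]; omega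

lemma pbSwap_apply (pb : Fin (n + 1) → ZMod 2) (i k : Fin (n + 1)) :
    pbSwap pb i k = pb (Equiv.swap i (i + 1) k) := by
  simp only [pbSwap, Equiv.swap_apply_def]; split_ifs <;> rfl

lemma swapL_apply (i : Fin (n + 1)) (l : Fin (n + 1) → ℤ) (k : Fin (n + 1)) :
    swapL i l k = l (Equiv.swap i (i + 1) k) := by
  simp only [swapL, Equiv.swap_apply_def]; split_ifs <;> rfl

lemma sg_pbSwap (pb : Fin (n + 1) → ZMod 2) (i k : Fin (n + 1)) :
    sg (pbSwap pb i) k = sg pb (Equiv.swap i (i + 1) k) := by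
  rw [sg, sg, pbSwap_apply]

lemma sg_pbSwap_self (pb : Fin (n + 1) → ZMod 2) (i : Fin (n + 1)) :
    sg (pbSwap pb i) i = sg pb (i + 1) := by
  rw [sg_pbSwap, Equiv.swap_apply_left]

lemma sg_pbSwap_add_one (pb : Fin (n + 1) → ZMod 2) (i : Fin (n + 1)) :
    sg (pbSwap pb i) (i + 1) = sg pb i := by
  rw [sg_pbSwap, Equiv.swap_apply_right]

lemma sg_mul_self (pb : Fin (n + 1) → ZMod 2) (k : Fin (n + 1)) : sg pb k * sg pb k = 1 := by
  unfold sg; split_ifs <;> rfl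

lemma sg_add_one_eq_neg (hpar : pb i + pb (i + 1) = 1) : sg pb (i + 1) = -sg pb i := by
  unfold sg; generalize pb i = x, pb (i + 1) = y at hpar ⊢; revert x y; decide

lemma lt_swap_apply_iff (hi : (i : ℕ) < n) {k : Fin (n + 1)} (hk : k ≠ i) (m : Fin (n + 1)) :
    k < Equiv.swap i (i + 1) m ↔ k < m := by
  have hv := val_add_one_of_val_lt hi
  rw [Fin.ne_iff_vne] at hk
  rw [Equiv.swap_apply_def]
  split_ifs with h₁ h₂
  · subst h₁; simp only [Fin.lt_def, hv]; omega
  · subst h₂; simp only [Fin.lt_def, hv]; omega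
  · rfl

lemma sum_Ioi_eq_add_sum_Ioi (hi : (i : ℕ) < n) {M : Type*} [AddCommMonoid M]
    (f : Fin (n + 1) → M) : ∑ m ∈ Ioi i, f m = f (i + 1) + ∑ m ∈ Ioi (i + 1), f m := by
  have hv := val_add_one_of_val_lt hi
  have hIoi : Ioi i = insert (i + 1) (Ioi (i + 1)) := by
    ext m
    simp only [mem_Ioi, mem_insert, Fin.lt_def, hv, Fin.ext_iff]
    omega
  rw [hIoi, sum_insert (by simp)]

lemma theta_eq_mul_sum (pb : Fin (n + 1) → ZMod 2) (j : Fin (n + 1)) :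
    theta pb j = sg pb j * ∑ m ∈ Ioi j, sg pb m := by
  rw [theta, mul_sum]; simp only [mul_comm]

lemma sum_Ioi_sg_pbSwap (hi : (i : ℕ) < n) {k : Fin (n + 1)} (hk : k ≠ i) :
    ∑ m ∈ Ioi k, sg (pbSwap pb i) m = ∑ m ∈ Ioi k, sg pb m := by
  exact sum_equiv (Equiv.swap i (i + 1)) (by simp [lt_swap_apply_iff hi hk])
    fun m _ => sg_pbSwap pb i m

lemma theta_pbSwap_of_ne (hi : (i : ℕ) < n) {k : Fin (n + 1)} (hk : k ≠ i) (hk' : k ≠ i + 1) :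
    theta (pbSwap pb i) k = theta pb k := by
  rw [theta_eq_mul_sum, theta_eq_mul_sum, sum_Ioi_sg_pbSwap hi hk, sg_pbSwap,
    Equiv.swap_apply_of_ne_of_ne hk hk']

lemma theta_pbSwap_self (hi : (i : ℕ) < n) (hpar : pb i + pb (i + 1) = 1) :
    theta (pbSwap pb i) i = theta pb (i + 1) - 1 := by
  have hst := sg_add_one_eq_neg hpar
  rw [theta_eq_mul_sum, theta_eq_mul_sum, sum_Ioi_eq_add_sum_Ioi hi,
    sum_Ioi_sg_pbSwap hi (add_one_ne_self_of_val_lt hi), sg_pbSwap_self, sg_pbSwap_add_one, hst]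
  linear_combination -sg_mul_self pb i

lemma theta_pbSwap_add_one (hi : (i : ℕ) < n) (hpar : pb i + pb (i + 1) = 1) :
    theta (pbSwap pb i) (i + 1) = theta pb i + 1 := by
  have hst := sg_add_one_eq_neg hpar
  rw [theta_eq_mul_sum, theta_eq_mul_sum, sum_Ioi_eq_add_sum_Ioi hi,
    sum_Ioi_sg_pbSwap hi (add_one_ne_self_of_val_lt hi), sg_pbSwap_add_one, hst]
  linear_combination sg_mul_self pb i

lemma rho_pbSwap_of_ne (hi : (i : ℕ) < n) {k : Fin (n + 1)} (hk : k ≠ i) (hk' : k ≠ i + 1) :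
    rho (pbSwap pb i) k = rho pb k := by
  rw [rho, rho, theta_pbSwap_of_ne hi hk hk', pbSwap_apply,
    Equiv.swap_apply_of_ne_of_ne hk hk']

lemma rho_pbSwap_self (hi : (i : ℕ) < n) (hpar : pb i + pb (i + 1) = 1) :
    rho (pbSwap pb i) i = rho pb (i + 1) - 1 := by
  rw [rho, rho, theta_pbSwap_self hi hpar, pbSwap_apply,
    Equiv.swap_apply_left]
  ring

lemma rho_pbSwap_add_one (hi : (i : ℕ) < n) (hpar : pb i + pb (i + 1) = 1) :
    rho (pbSwap pb i) (i + 1) = rho pb i + 1 := by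
  rw [rho, rho, theta_pbSwap_add_one hi hpar, pbSwap_apply,
    Equiv.swap_apply_right]
  ring

lemma sg_mul_rho_add_one (hi : (i : ℕ) < n) (hpar : pb i + pb (i + 1) = 1) :
    sg pb (i + 1) * rho pb (i + 1) = sg pb i * rho pb i := by
  have key : sg pb (i + 1) * (if pb (i + 1) = 0 then 1 else 0) =
      sg pb (i + 1) + sg pb i * (if pb i = 0 then 1 else 0) := by
    unfold sg; generalize pb i = x, pb (i + 1) = y at hpar ⊢; revert x y; decide
  rw [rho, rho, theta_eq_mul_sum, theta_eq_mul_sum, sum_Ioi_eq_add_sum_Ioi hi]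
  linear_combination key + (∑ m ∈ Ioi (i + 1), sg pb m) * sg_mul_self pb (i + 1)
    - (sg pb (i + 1) + ∑ m ∈ Ioi (i + 1), sg pb m) * sg_mul_self pb i

lemma swapL_swapL (i : Fin (n + 1)) (l : Fin (n + 1) → ℤ) : swapL i (swapL i l) = l := by
  funext k; simp [swapL_apply]

lemma swapL_add_eps_sub_eps (i : Fin (n + 1)) (l : Fin (n + 1) → ℤ) :
    swapL i (l + eps i - eps (i + 1)) = swapL i l + eps (i + 1) - eps i := by
  funext k
  simp only [swapL_apply, Pi.add_apply, Pi.sub_apply, eps,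
    Equiv.swap_apply_eq_iff, Equiv.swap_apply_left, Equiv.swap_apply_right]

/-- `(λ, ε_i − ε_{i+1})`, the quantity whose vanishing mod `p` decides the case in `sI`. -/
def pairingRoot (pb : Fin (n + 1) → ZMod 2) (i : Fin (n + 1)) (l : Fin (n + 1) → ℤ) : ℤ :=
  sg pb i * l i - sg pb (i + 1) * l (i + 1)

lemma sI_of_pairingRoot_eq_zero {p : ℕ} {l : Fin (n + 1) → ℤ}
    (h : ((pairingRoot pb i l : ℤ) : ZMod p) = 0) : sI pb p i l = swapL i l :=
  if_pos h

lemma sI_of_pairingRoot_ne_zero {p : ℕ} {l : Fin (n + 1) → ℤ}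
    (h : ((pairingRoot pb i l : ℤ) : ZMod p) ≠ 0) :
    sI pb p i l = swapL i l + eps i - eps (i + 1) :=
  if_neg h

lemma sI_apply_of_ne (p : ℕ) (l : Fin (n + 1) → ℤ) {k : Fin (n + 1)} (hk : k ≠ i)
    (hk' : k ≠ i + 1) : sI pb p i l k = l k := by
  unfold sI; split_ifs <;> simp [swapL, eps, hk, hk']

lemma pairingRoot_pbSwap_sI (hi : (i : ℕ) < n) (hpar : pb i + pb (i + 1) = 1) (p : ℕ)
    (l : Fin (n + 1) → ℤ) :
    pairingRoot (pbSwap pb i) i (sI pb p i l) = -pairingRoot pb i l := by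
  have hne := add_one_ne_self_of_val_lt hi
  have hst := sg_add_one_eq_neg hpar
  by_cases h : ((pairingRoot pb i l : ℤ) : ZMod p) = 0
  · rw [sI_of_pairingRoot_eq_zero h, pairingRoot, pairingRoot, sg_pbSwap_self,
      sg_pbSwap_add_one]
    simp only [swapL, if_pos, if_neg hne]
    ring
  · rw [sI_of_pairingRoot_ne_zero h, pairingRoot, pairingRoot, sg_pbSwap_self,
      sg_pbSwap_add_one]
    simp only [hst, Pi.add_apply, Pi.sub_apply, swapL, eps, if_pos, if_neg hne, if_neg hne.symm]
    ring

lemma sI_pbSwap_sI (hi : (i : ℕ) < n) (hpar : pb i + pb (i + 1) = 1) (p : ℕ)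
    (l : Fin (n + 1) → ℤ) : sI (pbSwap pb i) p i (sI pb p i l) = l := by
  have hswap := pairingRoot_pbSwap_sI hi hpar p l
  by_cases h : ((pairingRoot pb i l : ℤ) : ZMod p) = 0
  · have h' : ((pairingRoot (pbSwap pb i) i (sI pb p i l) : ℤ) : ZMod p) = 0 := by
      rw [hswap, Int.cast_neg, h, neg_zero]
    rw [sI_of_pairingRoot_eq_zero h', sI_of_pairingRoot_eq_zero h, swapL_swapL]
  · have h' : ((pairingRoot (pbSwap pb i) i (sI pb p i l) : ℤ) : ZMod p) ≠ 0 := by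
      rwa [hswap, Int.cast_neg, neg_ne_zero]
    rw [sI_of_pairingRoot_ne_zero h', sI_of_pairingRoot_ne_zero h, swapL_add_eps_sub_eps,
      swapL_swapL]
    abel

theorem weightSum_pbSwap_sI {M : Type*} [AddCommGroup M] {p : ℕ} (g : ℤ → M)
    (hg : ∀ a b c, a ≡ b [ZMOD p] → g (a + c) - g (b + c) = g a - g b)
    (hi : (i : ℕ) < n) (hpar : pb i + pb (i + 1) = 1) (l : Fin (n + 1) → ℤ) :
    weightSum g (pbSwap pb i) (sI pb p i l) = weightSum g pb l := by
  have hne := add_one_ne_self_of_val_lt hi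
  have hst := sg_add_one_eq_neg hpar
  refine sum_eq_sum_of_eq_off_pair hne.symm (fun k hk hk' => ?_) ?_
  · rw [sI_apply_of_ne p l hk hk', rho_pbSwap_of_ne hi hk hk', sg_pbSwap,
      Equiv.swap_apply_of_ne_of_ne hk hk']
  rw [sg_pbSwap_self, sg_pbSwap_add_one, rho_pbSwap_self hi hpar, rho_pbSwap_add_one hi hpar]
  set a := sg pb i * (l i + rho pb i)
  set b := sg pb (i + 1) * (l (i + 1) + rho pb (i + 1))
  by_cases h : ((pairingRoot pb i l : ℤ) : ZMod p) = 0
  · have hab : a ≡ b [ZMOD p] := by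
      have hba : b - a = -pairingRoot pb i l := by
        simp only [a, b, pairingRoot]
        linear_combination sg_mul_rho_add_one hi hpar
      rw [Int.modEq_iff_dvd, hba, dvd_neg, ← ZMod.intCast_zmod_eq_zero_iff_dvd]
      exact h
    rw [sI_of_pairingRoot_eq_zero h]
    simp only [swapL, if_pos, if_neg hne]
    have hb : sg pb (i + 1) * (l (i + 1) + (rho pb (i + 1) - 1)) = b + sg pb i := by
      simp only [b, hst]; ring
    have ha : sg pb i * (l i + (rho pb i + 1)) = a + sg pb i := by ring
    rw [ha, hb, hst]
    linear_combination (norm := module) sg pb i • hg a b (sg pb i) hab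
  · rw [sI_of_pairingRoot_ne_zero h]
    simp only [swapL, eps, Pi.add_apply, Pi.sub_apply, if_pos, if_neg hne, if_neg hne.symm]
    have hb : sg pb (i + 1) * (l (i + 1) + 1 - 0 + (rho pb (i + 1) - 1)) = b := by ring
    have ha : sg pb i * (l i + 0 - 1 + (rho pb i + 1)) = a := by ring
    rw [ha, hb, add_comm]

end OddReflection

lemma gammaP_add_mul {p : ℕ} (hp : p ≠ 0) (a k : ℤ) :
    gammaP p (a + p * k) = gammaP p a - k • delP p := by
  have hp' : (p : ℤ) ≠ 0 := Int.natCast_ne_zero.mpr hp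
  have hshift : a + p * k - 1 = (a - 1) + k * p := by ring
  simp only [gammaP, hshift, Int.add_mul_emod_self_right, Int.add_mul_ediv_right _ _ hp']
  module

lemma gammaP_sub_gammaP_add {p : ℕ} (hp : p ≠ 0) {a b : ℤ} (hab : a ≡ b [ZMOD p]) (c : ℤ) :
    gammaP p (a + c) - gammaP p (b + c) = gammaP p a - gammaP p b := by
  obtain ⟨k, hk⟩ := Int.modEq_iff_dvd.mp hab
  obtain rfl : b = a + p * k := by linarith
  rw [add_right_comm, gammaP_add_mul hp, gammaP_add_mul hp]
  abel

theorem statement19_general (p : ℕ) (pb : Fin (n + 1) → ZMod 2)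
    (i : Fin (n + 1)) (hi : (i : ℕ) < n) (hpar : pb i + pb (i + 1) = 1)
    (lam : Fin (n + 1) → ℤ) :
    (p = 0 → wt0 (pbSwap pb i) (sI pb p i lam) = wt0 pb lam) ∧
      (p.Prime → wtP p (pbSwap pb i) (sI pb p i lam) = wtP p pb lam) ∧
      sI (pbSwap pb i) p i (sI pb p i lam) = lam := by
  refine ⟨fun hp0 => ?_, fun hp => ?_, sI_pbSwap_sI hi hpar p lam⟩
  · subst hp0
    refine weightSum_pbSwap_sI gamma0 (fun a b c hab => ?_) hi hpar lam
    rw [Int.modEq_zero_iff.mp (by exact_mod_cast hab : a ≡ b [ZMOD 0]), sub_self, sub_self]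
  · exact weightSum_pbSwap_sI (gammaP p)
      (fun _ _ c hab => gammaP_sub_gammaP_add hp.ne_zero hab c) hi hpar lam

/-- `wt′(s_i(λ)) = wt(λ)` in `P` (in the `p = 0` setting and in the
prime-`p` setting), and `s′_i(s_i(λ)) = λ`, so `s_i` is a bijection. -/
theorem statement19 (p : ℕ) (hp : p = 0 ∨ p.Prime) (pb : Fin (n + 1) → ZMod 2)
    (i : Fin (n + 1)) (hi : (i : ℕ) < n) (hpar : pb i + pb (i + 1) = 1)
    (lam : Fin (n + 1) → ℤ) :
    (p = 0 → wt0 (pbSwap pb i) (sI pb p i lam) = wt0 pb lam) ∧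
      (p.Prime → wtP p (pbSwap pb i) (sI pb p i lam) = wtP p pb lam) ∧
      sI (pbSwap pb i) p i (sI pb p i lam) = lam :=
  statement19_general p pb i hi hpar lam

end Kujawa
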